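/- arXiv:math/0611263 — 3 statements merged into one kernel-verified Lean document; each statement's English description precedes it below -/
import Mathlib

section
/- Let Σ₀ be a positive definite p×p real matrix, let σ_1,…,σ_K be positive scalars, and set Σ_k = σ_k²·Σ₀ for k = 1,…,K. Let μ_1,…,μ_K ∈ ℝ^p and suppose there exists d ∈ ℝ^p such that μ_i − μ_j lies in the span of d for all i, j. Then there exist an invertible p×p matrix A, a vector b ∈ ℝ^p, and scalars δ_1,…,δ_K such that A Σ_k Aᵀ = σ_k²·I and A μ_k + b = δ_k·U for every k, where U is the all-ones vector in ℝ^p. -/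
/-!
Whitening `x ↦ W x` with `W Σ₀ Wᵀ = I` makes every component spherical, and composing with an
orthogonal map keeps it so. Since the centers differ by multiples of `d`, it suffices to send the
whitened direction `W d` to a multiple of the all-ones vector `U`; a Householder reflection does
this, because `U` can be scaled to have the same length as `W d`.
-/

open Matrix

theorem exists_forall_eq_add_smul_of_forall_sub_eq_smul {ι R V : Type*} [Ring R]
    [AddCommGroup V] [Module R V] {μ : ι → V} {d : V} (h : ∀ i j, ∃ t : R, μ i - μ j = t • d) :
    ∃ m : V, ∀ i, ∃ t : R, μ i = m + t • d := by
  rcases isEmpty_or_nonempty ι with hι | ⟨⟨i₀⟩⟩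
  · exact ⟨0, isEmptyElim⟩
  · refine ⟨μ i₀, fun i => ?_⟩
    obtain ⟨t, ht⟩ := h i i₀
    exact ⟨t, eq_add_of_sub_eq' ht⟩

theorem exists_smul_one_dotProduct_self_eq {n : Type*} [Fintype n] (v : n → ℝ) :
    ∃ c : ℝ, (c • 1 : n → ℝ) ⬝ᵥ (c • 1) = v ⬝ᵥ v := by
  rcases isEmpty_or_nonempty n with hn | hn
  · exact ⟨0, by simp [dotProduct]⟩
  · have hv : 0 ≤ v ⬝ᵥ v := by simpa using dotProduct_self_star_nonneg v
    refine ⟨√(v ⬝ᵥ v / Fintype.card n), ?_⟩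
    rw [smul_dotProduct, dotProduct_smul, one_dotProduct_one, smul_smul, smul_eq_mul, ← sq,
      Real.sq_sqrt (by positivity)]
    field_simp

theorem exists_mem_orthogonalGroup_mulVec_eq {n : Type*} [Fintype n] [DecidableEq n]
    {a b : n → ℝ} (h : a ⬝ᵥ a = b ⬝ᵥ b) : ∃ H ∈ orthogonalGroup n ℝ, H *ᵥ a = b := by
  let e := EuclideanSpace.basisFun n ℝ
  let a' : EuclideanSpace ℝ n := WithLp.toLp 2 a
  let b' : EuclideanSpace ℝ n := WithLp.toLp 2 b
  let R := Submodule.reflection (ℝ ∙ (a' - b'))ᗮ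
  have hnorm : ‖a'‖ = ‖b'‖ := by
    have : inner ℝ a' a' = inner ℝ b' b' := by
      simp only [a', b', EuclideanSpace.inner_eq_star_dotProduct, star_trivial]
      exact h
    rwa [real_inner_self_eq_norm_sq, real_inner_self_eq_norm_sq,
      sq_eq_sq₀ (norm_nonneg _) (norm_nonneg _)] at this
  have hR : R a' = b' := Submodule.reflection_sub hnorm
  refine ⟨R.toMatrix e.toBasis e.toBasis, R.toMatrix_mem_unitaryGroup e e, ?_⟩
  exact (LinearMap.toMatrix_mulVec_repr e.toBasis e.toBasis R.toLinearEquiv.toLinearMap a').trans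
    (congrArg (fun x => ⇑(e.toBasis.repr x)) hR)

namespace Matrix.PosDef

variable {n : Type*} [Fintype n] [DecidableEq n] {S : Matrix n n ℝ}

open scoped MatrixOrder in
theorem exists_isUnit_mul_mul_transpose_eq_one (hS : S.PosDef) :
    ∃ W : Matrix n n ℝ, IsUnit W ∧ W * S * Wᵀ = 1 := by
  obtain ⟨B, hB, rfl⟩ :=
    CStarAlgebra.isStrictlyPositive_iff_eq_star_mul_self.mp hS.isStrictlyPositive
  have hBdet : IsUnit B.det := (isUnit_iff_isUnit_det B).mp hB
  refine ⟨(Bᵀ)⁻¹, isUnit_nonsing_inv_iff.mpr ((isUnit_transpose B).mpr hB), ?_⟩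
  rw [star_eq_conjTranspose, conjTranspose_eq_transpose_of_trivial, transpose_nonsing_inv,
    transpose_transpose, ← Matrix.mul_assoc, nonsing_inv_mul _ (by rwa [det_transpose]),
    Matrix.one_mul, mul_nonsing_inv _ hBdet]

theorem exists_isUnit_mul_mul_transpose_eq_one_and_mulVec_eq_smul_one (hS : S.PosDef)
    (v : n → ℝ) :
    ∃ A : Matrix n n ℝ, IsUnit A ∧ A * S * Aᵀ = 1 ∧ ∃ c : ℝ, A *ᵥ v = c • 1 := by
  obtain ⟨W, hW, hWS⟩ := hS.exists_isUnit_mul_mul_transpose_eq_one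
  obtain ⟨c, hc⟩ := exists_smul_one_dotProduct_self_eq (W *ᵥ v)
  obtain ⟨H, hH, hHv⟩ := exists_mem_orthogonalGroup_mulVec_eq hc.symm
  refine ⟨H * W, (Unitary.isUnit_coe (U := ⟨H, hH⟩)).mul hW, ?_, c, ?_⟩
  · calc H * W * S * (H * W)ᵀ = H * (W * S * Wᵀ) * Hᵀ := by
          simp only [transpose_mul, Matrix.mul_assoc]
      _ = 1 := by rw [hWS, Matrix.mul_one, (mem_orthogonalGroup_iff n ℝ).mp hH]
  · rw [← mulVec_mulVec, hHv]

end Matrix.PosDef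

theorem stmt8_general (p K : ℕ) (S0 : Matrix (Fin p) (Fin p) ℝ) (hS0 : S0.PosDef)
    (σ : Fin K → ℝ)
    (μ : Fin K → (Fin p → ℝ)) (d : Fin p → ℝ)
    (hline : ∀ i j, ∃ t : ℝ, μ i - μ j = t • d) :
    ∃ A : Matrix (Fin p) (Fin p) ℝ, IsUnit A ∧ ∃ b : Fin p → ℝ, ∃ δ : Fin K → ℝ,
      ∀ k, A * ((σ k) ^ 2 • S0) * Aᵀ = (σ k) ^ 2 • (1 : Matrix (Fin p) (Fin p) ℝ) ∧
        A.mulVec (μ k) + b = δ k • (fun _ => (1 : ℝ)) := by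
  obtain ⟨m, hm⟩ := exists_forall_eq_add_smul_of_forall_sub_eq_smul hline
  choose t ht using hm
  obtain ⟨A, hA, hAS, c, hAd⟩ :=
    hS0.exists_isUnit_mul_mul_transpose_eq_one_and_mulVec_eq_smul_one d
  refine ⟨A, hA, -(A *ᵥ m), fun k => t k * c, fun k => ⟨?_, ?_⟩⟩
  · rw [Matrix.mul_smul, Matrix.smul_mul, hAS]
  · rw [ht k, mulVec_add, mulVec_smul, hAd, smul_smul, add_neg_cancel_comm]
    rfl

/-- Canonical form for DMPES distributions: if `Σ_k = σ_k² Σ₀` with `Σ₀` positive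
definite and all pairwise differences of the centers `μ_k` lie on a common line, then a
single affine transformation `x ↦ A x + b` makes every component spherical
(`A Σ_k Aᵀ = σ_k² I`) and places every center on the all-ones vector (`A μ_k + b = δ_k U`). -/
theorem stmt8 (p K : ℕ) (S0 : Matrix (Fin p) (Fin p) ℝ) (hS0 : S0.PosDef)
    (σ : Fin K → ℝ) (hσ : ∀ k, 0 < σ k)
    (μ : Fin K → (Fin p → ℝ)) (d : Fin p → ℝ)
    (hline : ∀ i j, ∃ t : ℝ, μ i - μ j = t • d) :
    ∃ A : Matrix (Fin p) (Fin p) ℝ, IsUnit A ∧ ∃ b : Fin p → ℝ, ∃ δ : Fin K → ℝ,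
      ∀ k, A * ((σ k) ^ 2 • S0) * Aᵀ = (σ k) ^ 2 • (1 : Matrix (Fin p) (Fin p) ℝ) ∧
        A.mulVec (μ k) + b = δ k • (fun _ => (1 : ℝ)) :=
  stmt8_general p K S0 hS0 σ μ d hline
end

section
/- Let D be a square-integrable random vector in ℝ^p whose covariance matrix equals a·(I + c·U Uᵀ) for scalars a and c, where U is the all-ones vector in ℝ^p. Let β be a unit vector in ℝ^p and set ρ = ⟨β, U⟩/√p. Then for every unit vector γ with ⟨γ, U⟩ = 0, Var(⟨β, D⟩) = ρ²·Var(⟨U, D⟩/√p) + (1 − ρ²)·Var(⟨γ, D⟩). -/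
/-!
The variance of `⟨v, D⟩` is the quadratic form `vᵀ Σ v = a (‖v‖² + c ⟨v, U⟩²)` of the covariance
matrix, so it only sees `‖v‖` and `⟨v, U⟩`. Since `‖β‖ = ‖γ‖ = 1`, `⟨γ, U⟩ = 0`, `⟨U, U⟩ = p` and
`⟨β, U⟩² = p ρ²`, both sides equal `a (1 + c p ρ²)`.
-/

open MeasureTheory ProbabilityTheory Matrix

theorem variance_dotProduct {Ω ι : Type*} [MeasurableSpace Ω] [Fintype ι] {μ : Measure Ω}
    [IsFiniteMeasure μ] {D : Ω → ι → ℝ} (hD : ∀ i, MemLp (fun ω => D ω i) 2 μ) (v : ι → ℝ) :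
    Var[fun ω => v ⬝ᵥ D ω; μ]
      = v ⬝ᵥ (Matrix.of (fun i j => cov[fun ω => D ω i, fun ω => D ω j; μ]) *ᵥ v) := by
  have hvD : ∀ i, MemLp (fun ω => v i * D ω i) 2 μ := fun i => (hD i).const_mul (v i)
  have hmeas : AEMeasurable (fun ω => v ⬝ᵥ D ω) μ :=
    (memLp_finsetSum _ fun i _ => hvD i).aemeasurable
  rw [← covariance_self hmeas]
  simp only [dotProduct]
  rw [covariance_fun_sum_fun_sum hvD hvD]
  simp only [covariance_const_mul_left, covariance_const_mul_right, mulVec, dotProduct,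
    Matrix.of_apply, Finset.mul_sum]
  refine Finset.sum_congr rfl fun i _ => Finset.sum_congr rfl fun j _ => by ring

theorem dotProduct_smul_one_add_smul_vecMulVec_mulVec {ι : Type*} [Fintype ι] [DecidableEq ι]
    (a c : ℝ) (u v : ι → ℝ) :
    v ⬝ᵥ ((a • ((1 : Matrix ι ι ℝ) + c • vecMulVec u u)) *ᵥ v)
      = a * (v ⬝ᵥ v) + a * c * (v ⬝ᵥ u) ^ 2 := by
  simp only [smul_mulVec, add_mulVec, one_mulVec, vecMulVec_mulVec, dotProduct_smul,
    dotProduct_add, smul_eq_mul, op_smul_eq_mul, dotProduct_comm u v]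
  ring

/-- Variance decomposition (Corollary 4.2): if the covariance matrix of `D` is
`a (I + c U Uᵀ)`, `β` is a unit vector with `ρ = ⟨β, U⟩/√p`, then for every unit vector
`γ ⊥ U`, `Var(⟨β, D⟩) = ρ² Var(⟨U, D⟩/√p) + (1 - ρ²) Var(⟨γ, D⟩)`. -/
theorem stmt13 {Ω : Type*} [MeasurableSpace Ω] (μ : Measure Ω)
    [IsProbabilityMeasure μ] (p : ℕ) (D : Ω → (Fin p → ℝ))
    (hD2 : ∀ i, MemLp (fun ω => D ω i) 2 μ) (a c : ℝ)
    (hcov : (Matrix.of fun i j =>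
        ∫ ω, (D ω i - ∫ ω', D ω' i ∂μ) * (D ω j - ∫ ω', D ω' j ∂μ) ∂μ)
      = a • ((1 : Matrix (Fin p) (Fin p) ℝ) +
          c • Matrix.vecMulVec (fun _ => (1 : ℝ)) (fun _ => (1 : ℝ))))
    (β : Fin p → ℝ) (hβ : β ⬝ᵥ β = 1)
    (ρ : ℝ) (hρ : ρ = β ⬝ᵥ (fun _ => (1 : ℝ)) / Real.sqrt p) :
    ∀ γ : Fin p → ℝ, γ ⬝ᵥ γ = 1 → γ ⬝ᵥ (fun _ => (1 : ℝ)) = 0 →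
      variance (fun ω => β ⬝ᵥ D ω) μ
        = ρ ^ 2 * variance (fun ω => ((fun _ => (1 : ℝ)) ⬝ᵥ D ω) / Real.sqrt p) μ
          + (1 - ρ ^ 2) * variance (fun ω => γ ⬝ᵥ D ω) μ := by
  intro γ hγ hγU
  set U : Fin p → ℝ := fun _ => 1
  have hvar : ∀ v, Var[fun ω => v ⬝ᵥ D ω; μ] = a * (v ⬝ᵥ v) + a * c * (v ⬝ᵥ U) ^ 2 := by
    intro v
    rw [variance_dotProduct hD2, ← dotProduct_smul_one_add_smul_vecMulVec_mulVec, ← hcov]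
    -- `cov[X, Y; μ]` unfolds to the centred integral appearing in `hcov`
    rfl
  have hp : (0 : ℝ) < p := by
    rcases Nat.eq_zero_or_pos p with rfl | hp
    · simp [dotProduct] at hβ
    · exact_mod_cast hp
  have hUU : U ⬝ᵥ U = p := by simp [U, dotProduct]
  have hZ : Var[fun ω => (U ⬝ᵥ D ω) / √p; μ] = a + a * c * p := by
    simp only [div_eq_mul_inv, variance_mul_const, hvar, hUU, inv_pow,
      Real.sq_sqrt hp.le]
    field_simp
  rw [hvar, hvar, hZ, hβ, hγ, hγU, hρ, div_pow, Real.sq_sqrt hp.le]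
  field_simp
  ring
end

section
/- Let μ be a probability measure on ℝ^s × ℝ^r (with ℝ^r carrying the standard inner product) that is invariant under every map (x, y) ↦ (x, O y) where O is a linear isometry of ℝ^r with O(U_r) = U_r, U_r being the all-ones vector in ℝ^r. Then for any two unit vectors γ, γ' ∈ ℝ^r with ⟨γ, U_r⟩ = ⟨γ', U_r⟩ = 0, the pushforward of μ under (x, y) ↦ (x, ⟨γ, y⟩) equals the pushforward of μ under (x, y) ↦ (x, ⟨γ', y⟩). -/
open MeasureTheory
open scoped RealInnerProductSpace

/-! The reflection in the hyperplane orthogonal to `γ' - γ` fixes `U` and swaps `γ` and `γ'`;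
by invariance of `μ` it may be applied to the second coordinate without changing the law, and it
turns `⟪γ, y⟫` into `⟪γ', y⟫`. -/

section

variable {E : Type*} [NormedAddCommGroup E] [InnerProductSpace ℝ E]

theorem exists_linearIsometryEquiv_apply_eq_of_norm_eq_of_inner_eq {x y u : E}
    (hxy : ‖x‖ = ‖y‖) (hu : ⟪x, u⟫ = ⟪y, u⟫) :
    ∃ O : E ≃ₗᵢ[ℝ] E, O u = u ∧ O x = y := by
  refine ⟨Submodule.reflection (ℝ ∙ (x - y))ᗮ, ?_, Submodule.reflection_sub hxy⟩
  apply Submodule.reflection_mem_subspace_eq_self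
  rw [Submodule.mem_orthogonal_singleton_iff_inner_right, inner_sub_left, hu, sub_self]

variable [MeasurableSpace E] [BorelSpace E] {α : Type*} [MeasurableSpace α]

theorem map_prodMk_inner_linearIsometryEquiv {μ : Measure (α × E)} {O : E ≃ₗᵢ[ℝ] E}
    (hμ : μ.map (fun p => (p.1, O p.2)) = μ) (x : E) :
    μ.map (fun p => (p.1, ⟪O x, p.2⟫)) = μ.map (fun p => (p.1, ⟪x, p.2⟫)) := by
  have hO : Measurable fun p : α × E => (p.1, O p.2) :=
    measurable_fst.prodMk (O.continuous.measurable.comp measurable_snd)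
  have hinner : Measurable fun p : α × E => (p.1, ⟪O x, p.2⟫) :=
    measurable_fst.prodMk ((continuous_const.inner continuous_id).measurable.comp measurable_snd)
  calc μ.map (fun p => (p.1, ⟪O x, p.2⟫))
      = (μ.map (fun p => (p.1, O p.2))).map (fun p => (p.1, ⟪O x, p.2⟫)) := by rw [hμ]
    _ = μ.map (fun p => (p.1, ⟪O x, O p.2⟫)) := Measure.map_map hinner hO
    _ = μ.map (fun p => (p.1, ⟪x, p.2⟫)) := by simp only [LinearIsometryEquiv.inner_map_map]

end

theorem stmt17_general (s r : ℕ)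
    (μ : Measure ((Fin s → ℝ) × EuclideanSpace ℝ (Fin r)))
    (U : EuclideanSpace ℝ (Fin r))
    (hinv : ∀ O : EuclideanSpace ℝ (Fin r) ≃ₗᵢ[ℝ] EuclideanSpace ℝ (Fin r),
      O U = U → μ.map (fun xy => (xy.1, O xy.2)) = μ)
    (γ γ' : EuclideanSpace ℝ (Fin r)) (hγ : ‖γ‖ = 1) (hγ' : ‖γ'‖ = 1)
    (hγU : ⟪γ, U⟫ = 0) (hγ'U : ⟪γ', U⟫ = 0) :
    μ.map (fun xy => (xy.1, ⟪γ, xy.2⟫)) = μ.map (fun xy => (xy.1, ⟪γ', xy.2⟫)) := by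
  obtain ⟨O, hOU, hOγ⟩ := exists_linearIsometryEquiv_apply_eq_of_norm_eq_of_inner_eq
    (hγ.trans hγ'.symm) (hγU.trans hγ'U.symm)
  rw [← hOγ]
  exact (map_prodMk_inner_linearIsometryEquiv (hinv O hOU) γ).symm

/-- Corollary 6.1: if a probability measure on ℝ^s × ℝ^r is invariant under every map
`(x, y) ↦ (x, O y)` with `O` a linear isometry of ℝ^r fixing the all-ones vector `U_r`,
then the pushforwards under `(x, y) ↦ (x, ⟨γ, y⟩)` and `(x, y) ↦ (x, ⟨γ', y⟩)` agree
for any two unit vectors `γ, γ'` orthogonal to `U_r`. -/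
theorem stmt17 (s r : ℕ)
    (μ : Measure ((Fin s → ℝ) × EuclideanSpace ℝ (Fin r)))
    [IsProbabilityMeasure μ]
    (U : EuclideanSpace ℝ (Fin r)) (hU : ∀ j, U j = 1)
    (hinv : ∀ O : EuclideanSpace ℝ (Fin r) ≃ₗᵢ[ℝ] EuclideanSpace ℝ (Fin r),
      O U = U → μ.map (fun xy => (xy.1, O xy.2)) = μ)
    (γ γ' : EuclideanSpace ℝ (Fin r)) (hγ : ‖γ‖ = 1) (hγ' : ‖γ'‖ = 1)
    (hγU : ⟪γ, U⟫ = 0) (hγ'U : ⟪γ', U⟫ = 0) :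
    μ.map (fun xy => (xy.1, ⟪γ, xy.2⟫)) = μ.map (fun xy => (xy.1, ⟪γ', xy.2⟫)) :=
  stmt17_general s r μ U hinv γ γ' hγ hγ' hγU hγ'U
end
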